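/- Suppose lim_{x→a⁺} s(x) = ∞, lim_{x→b} s(x)·M[a,x] = ∞, μ extends continuously to x = a with a finite value μ(a), and μ(x) converges to a limit in [−∞,∞] as x → b. If M[a,b] = ∫_a^b m(u) du < ∞, then the integral ∫_a^b μ(u) m(u) du converges and equals 0; equivalently, the mean of μ with respect to the probability measure π(du) = m(u) du / M[a,b] on (a,b) is zero. -/

import Mathlib

open MeasureTheory Filter Set Topology
open scoped Classical

noncomputable section

/-- The state interval `(a, b)` where `a` is real and `b ∈ (a, ∞]`. -/
def stInt (a : ℝ) (b : EReal) : Set ℝ := {x : ℝ | a < x ∧ (x : EReal) < b}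

/-- The filter of approach to the right endpoint `b ∈ (a, ∞]`:
`atTop` when `b = ∞`, and the left-neighborhood filter of `b` otherwise. -/
def atB (b : EReal) : Filter ℝ :=
  if b = ⊤ then Filter.atTop else nhdsWithin b.toReal (Set.Iio b.toReal)

/-- The scale density `s(x) = exp(-∫_{x₀}^x 2μ/σ²)`. -/
def sDen (μ σ : ℝ → ℝ) (x₀ x : ℝ) : ℝ :=
  Real.exp (-(∫ y in x₀..x, 2 * μ y / (σ y) ^ 2))

/-- The speed density `m(x) = 2/(σ(x)² s(x))`. -/
def mDen (μ σ : ℝ → ℝ) (x₀ x : ℝ) : ℝ :=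
  2 / ((σ x) ^ 2 * sDen μ σ x₀ x)

/-- `M[a,x] = ∫_a^x m(u) du`. -/
def Mab (μ σ : ℝ → ℝ) (x₀ a x : ℝ) : ℝ :=
  ∫ u in Set.Ioo a x, mDen μ σ x₀ u

/-- The time potential `ξ(x) = ∫_{x₀}^x M[a,v] s(v) dv`. -/
def xiF (μ σ : ℝ → ℝ) (x₀ a x : ℝ) : ℝ :=
  ∫ v in x₀..x, Mab μ σ x₀ a v * sDen μ σ x₀ v

/-- The running reward potential `g(x) = ∫_{x₀}^x (∫_a^v c(u) m(u) du) s(v) dv`. -/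
def gF (μ σ c : ℝ → ℝ) (x₀ a x : ℝ) : ℝ :=
  ∫ v in x₀..x, (∫ u in Set.Ioo a v, c u * mDen μ σ x₀ u) * sDen μ σ x₀ v

/-- `h(x) = (∫_a^x (γ c(u) + p μ(u)) m(u) du) / M[a,x]`. -/
def hF (μ σ c : ℝ → ℝ) (x₀ a p γ x : ℝ) : ℝ :=
  (∫ u in Set.Ioo a x, (γ * c u + p * μ u) * mDen μ σ x₀ u) / Mab μ σ x₀ a x

/-- The long-term average reward `F(w,y)` of the `(w,y)`-impulse policy. -/
def FF (μ σ c : ℝ → ℝ) (x₀ a p K γ w y : ℝ) : ℝ :=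
  (p * (y - w) - K + γ * (gF μ σ c x₀ a y - gF μ σ c x₀ a w)) /
    (xiF μ σ x₀ a y - xiF μ σ x₀ a w)

/-- `c̄(b)`: equals `⟨c,π⟩` when `M[a,b] < ∞` and the boundary value `c(b)` otherwise. -/
def cbar (μ σ c : ℝ → ℝ) (x₀ a : ℝ) (b : EReal) (cb : ℝ) : ℝ :=
  if MeasureTheory.IntegrableOn (mDen μ σ x₀) (stInt a b) MeasureTheory.volume then
    (∫ u in stInt a b, c u * mDen μ σ x₀ u) / (∫ u in stInt a b, mDen μ σ x₀ u)
  else cb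

/-! Since `s' = -(2μ/σ²) s`, the function `1/s` is an antiderivative of `μ m`. It tends to `0` at
`a` because `s → ∞` there, and also at `b`, because `s · M[a,·] → ∞` while `M[a,·] ≤ M[a,b] < ∞`;
so the improper integral of `μ m` over `(a,b)` is `0 - 0`.

For absolute convergence: `μ` is bounded near `a`, bounded on one side near `b` (its limit there is
`> -∞` or `< ∞`) and continuous in between, so `±μ ≥ -B` on all of `(a,b)`. Then `±μ m + B m ≥ 0`
has an antiderivative with finite limits at both ends, which bounds its integrals over `(t,x]`. -/

lemma Filter.Tendsto.atTop_of_mul_le_const₀ {α : Type*} {l : Filter α} [l.NeBot] {s M : α → ℝ}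
    {C : ℝ} (h : Tendsto (fun x => s x * M x) l atTop) (hs : ∀ᶠ x in l, 0 ≤ s x)
    (hM : ∀ᶠ x in l, M x ≤ C) : Tendsto s l atTop := by
  have hsC : Tendsto (fun x => s x * C) l atTop := by
    refine tendsto_atTop_mono' l ?_ h
    filter_upwards [hs, hM] with x hsx hMx
    exact mul_le_mul_of_nonneg_left hMx hsx
  have hC : 0 < C := by
    by_contra! hC
    obtain ⟨x, hpos, hsx⟩ := ((hsC.eventually_gt_atTop 0).and hs).exists
    nlinarith
  exact hsC.atTop_of_mul_const₀ hC

lemma hasDerivAt_integral_of_continuousOn {U : Set ℝ} (hU : IsOpen U) (hU' : U.OrdConnected)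
    {q : ℝ → ℝ} (hq : ContinuousOn q U) {x₀ x : ℝ} (hx₀ : x₀ ∈ U) (hx : x ∈ U) :
    HasDerivAt (fun x => ∫ y in x₀..x, q y) (q x) x :=
  intervalIntegral.integral_hasDerivAt_right
    ((hq.mono (hU'.uIcc_subset hx₀ hx)).intervalIntegrable)
    (hq.stronglyMeasurableAtFilter hU x hx) (hq.continuousAt (hU.mem_nhds hx))

section Interval

variable {a : ℝ} {b : EReal}

@[simp] lemma atB_top : atB ⊤ = atTop := if_pos rfl

@[simp] lemma atB_coe (c : ℝ) : atB c = 𝓝[<] c := by simp [atB]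

instance : (atB b).NeBot := by unfold atB; split_ifs <;> infer_instance

instance : (atB b).IsCountablyGenerated := by unfold atB; split_ifs <;> infer_instance

lemma isOpen_stInt : IsOpen (stInt a b) :=
  isOpen_Ioi.inter (isOpen_Iio.preimage continuous_coe_real_ereal)

lemma Icc_subset_stInt {t x : ℝ} (ht : a < t) (hx : (x : EReal) < b) : Icc t x ⊆ stInt a b :=
  fun _ hy => ⟨ht.trans_le hy.1, (EReal.coe_le_coe_iff.2 hy.2).trans_lt hx⟩

lemma ordConnected_stInt : (stInt a b).OrdConnected :=
  ⟨fun _ hx _ hy => Icc_subset_stInt hx.1 hy.2⟩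

lemma eventually_atB {y : ℝ} (hy : (y : EReal) < b) :
    ∀ᶠ x in atB b, y < x ∧ (x : EReal) < b := by
  induction b using EReal.rec with
  | bot => exact absurd hy not_lt_bot
  | coe c =>
    rw [atB_coe]
    filter_upwards [Ioo_mem_nhdsLT (EReal.coe_lt_coe_iff.1 hy)] with x hx
    exact ⟨hx.1, EReal.coe_lt_coe_iff.2 hx.2⟩
  | top =>
    rw [atB_top]
    filter_upwards [eventually_gt_atTop y] with x hx
    exact ⟨hx, EReal.coe_lt_top x⟩

lemma exists_forall_gt_of_eventually_atB (hb : b ≠ ⊥) {P : ℝ → Prop}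
    (h : ∀ᶠ x in atB b, P x) :
    ∃ c : ℝ, (c : EReal) < b ∧ ∀ x : ℝ, c < x → (x : EReal) < b → P x := by
  induction b using EReal.rec with
  | bot => exact absurd rfl hb
  | coe d =>
    obtain ⟨c, hc, hsub⟩ := mem_nhdsLT_iff_exists_Ioo_subset.1 (atB_coe d ▸ h)
    exact ⟨c, EReal.coe_lt_coe_iff.2 hc, fun x hcx hx => hsub ⟨hcx, EReal.coe_lt_coe_iff.1 hx⟩⟩
  | top =>
    obtain ⟨c, hc⟩ := eventually_atTop.1 (atB_top ▸ h)
    exact ⟨c, EReal.coe_lt_top c, fun x hcx _ => hc x hcx.le⟩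

lemma eventually_le_and_Icc_subset_stInt (hab : (a : EReal) < b) :
    ∀ᶠ p in 𝓝[>] a ×ˢ atB b, p.1 ≤ p.2 ∧ Icc p.1 p.2 ⊆ stInt a b := by
  obtain ⟨y, hay, hyb⟩ := EReal.lt_iff_exists_real_btwn.1 hab
  filter_upwards [Eventually.prod_mk (Ioo_mem_nhdsGT (EReal.coe_lt_coe_iff.1 hay))
    (eventually_atB hyb)] with p hp
  exact ⟨hp.1.2.le.trans hp.2.1.le, Icc_subset_stInt hp.1.1 hp.2.2⟩

lemma aecover_Ioc_stInt :
    AECover (volume.restrict (stInt a b)) (𝓝[>] a ×ˢ atB b) (fun p => Ioc p.1 p.2) where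
  ae_eventually_mem := by
    filter_upwards [ae_restrict_mem isOpen_stInt.measurableSet] with y hy
    filter_upwards [Eventually.prod_mk (Ioo_mem_nhdsGT hy.1) (eventually_atB hy.2)] with p hp
    exact ⟨hp.1.2, hp.2.1.le⟩
  measurableSet _ := measurableSet_Ioc

lemma bddBelow_image_stInt (hab : (a : EReal) < b) {φ : ℝ → ℝ} (hφ : ContinuousOn φ (stInt a b))
    (ha : IsBoundedUnder (· ≥ ·) (𝓝[>] a) φ) (hb : IsBoundedUnder (· ≥ ·) (atB b) φ) :
    BddBelow (φ '' stInt a b) := by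
  obtain ⟨B₁, hB₁⟩ := ha
  obtain ⟨B₂, hB₂⟩ := hb
  obtain ⟨c₁, hac₁, hc₁⟩ :=
    mem_nhdsGT_iff_exists_Ioo_subset.1 (show ∀ᶠ x in 𝓝[>] a, B₁ ≤ φ x from hB₁)
  obtain ⟨c₂, hc₂b, hc₂⟩ := exists_forall_gt_of_eventually_atB (ne_bot_of_gt hab)
    (show ∀ᶠ x in atB b, B₂ ≤ φ x from hB₂)
  obtain ⟨B₃, hB₃⟩ := isCompact_Icc.bddBelow_image (hφ.mono (Icc_subset_stInt hac₁ hc₂b))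
  refine ⟨min B₁ (min B₂ B₃), ?_⟩
  rintro _ ⟨x, hx, rfl⟩
  rcases lt_or_ge x c₁ with h₁ | h₁
  · exact (min_le_left _ _).trans (hc₁ ⟨hx.1, h₁⟩)
  rcases le_or_gt x c₂ with h₂ | h₂
  · exact (min_le_right _ _).trans ((min_le_right _ _).trans (hB₃ ⟨x, ⟨h₁, h₂⟩, rfl⟩))
  · exact (min_le_right _ _).trans ((min_le_left _ _).trans (hc₂ x h₂ hx.2))

lemma bddBelow_or_bddAbove_image_stInt (hab : (a : EReal) < b) {φ : ℝ → ℝ}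
    (hφ : ContinuousOn φ (stInt a b)) {φa : ℝ} (ha : Tendsto φ (𝓝[>] a) (𝓝 φa))
    (hb : ∃ L : EReal, Tendsto (fun x => (φ x : EReal)) (atB b) (𝓝 L)) :
    BddBelow (φ '' stInt a b) ∨ BddAbove (φ '' stInt a b) := by
  obtain ⟨L, hL⟩ := hb
  rcases eq_or_ne L ⊥ with rfl | hLbot
  · right
    have hneg : ∀ᶠ x in atB b, 0 ≤ -φ x := by
      filter_upwards [EReal.tendsto_nhds_bot_iff_real.1 hL 0] with x hx
      exact neg_nonneg.2 (EReal.coe_lt_coe_iff.1 hx).le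
    obtain ⟨B, hB⟩ := bddBelow_image_stInt hab hφ.neg ha.neg.isBoundedUnder_ge ⟨0, hneg⟩
    exact ⟨-B, by rintro _ ⟨x, hx, rfl⟩; linarith [show B ≤ -φ x from hB ⟨x, hx, rfl⟩]⟩
  · left
    obtain ⟨r, -, hrL⟩ := EReal.lt_iff_exists_real_btwn.1 (bot_lt_iff_ne_bot.2 hLbot)
    have hr : ∀ᶠ x in atB b, r ≤ φ x := by
      filter_upwards [hL.eventually (lt_mem_nhds hrL)] with x hx
      exact (EReal.coe_lt_coe_iff.1 hx).le
    exact bddBelow_image_stInt hab hφ ha.isBoundedUnder_ge ⟨r, hr⟩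

end Interval

section ImproperIntegral

variable {a : ℝ} {b : EReal} {f g h : ℝ → ℝ} {la lb : ℝ}

lemma tendsto_setIntegral_Ioc_stInt {E : Type*} [NormedAddCommGroup E] [NormedSpace ℝ E]
    (hab : (a : EReal) < b) {g : ℝ → E} (hg : IntegrableOn g (stInt a b)) :
    Tendsto (fun p : ℝ × ℝ => ∫ u in Ioc p.1 p.2, g u) (𝓝[>] a ×ˢ atB b)
      (𝓝 (∫ u in stInt a b, g u)) := by
  refine (aecover_Ioc_stInt.integral_tendsto_of_countably_generated hg).congr' ?_
  filter_upwards [eventually_le_and_Icc_subset_stInt hab] with p hp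
  rw [Measure.restrict_restrict measurableSet_Ioc,
    inter_eq_left.2 (Ioc_subset_Icc_self.trans hp.2)]

lemma integral_Ioc_eq_sub_of_hasDerivAt {t x : ℝ} (htx : t ≤ x)
    (hf : ∀ y ∈ Icc t x, HasDerivAt f (g y) y) (hg : IntegrableOn g (Icc t x)) :
    ∫ y in Ioc t x, g y = f x - f t := by
  rw [← intervalIntegral.integral_of_le htx]
  exact intervalIntegral.integral_eq_sub_of_hasDerivAt (by rwa [uIcc_of_le htx])
    ((intervalIntegrable_iff_integrableOn_Icc_of_le htx).2 hg)

theorem integral_stInt_of_hasDerivAt_of_tendsto (hab : (a : EReal) < b)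
    (hf : ∀ x ∈ stInt a b, HasDerivAt f (g x) x) (hg : IntegrableOn g (stInt a b))
    (hfa : Tendsto f (𝓝[>] a) (𝓝 la)) (hfb : Tendsto f (atB b) (𝓝 lb)) :
    ∫ x in stInt a b, g x = lb - la := by
  refine tendsto_nhds_unique (tendsto_setIntegral_Ioc_stInt hab hg)
    (((hfb.comp tendsto_snd).sub (hfa.comp tendsto_fst)).congr' ?_)
  filter_upwards [eventually_le_and_Icc_subset_stInt hab] with p ⟨hle, hsub⟩
  exact (integral_Ioc_eq_sub_of_hasDerivAt hle (fun y hy => hf y (hsub hy))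
    (hg.mono_set hsub)).symm

theorem integrableOn_stInt_of_hasDerivAt_of_neg_le (hab : (a : EReal) < b)
    (hf : ∀ x ∈ stInt a b, HasDerivAt f (g x) x) (hg : ContinuousOn g (stInt a b))
    (hfa : Tendsto f (𝓝[>] a) (𝓝 la)) (hfb : Tendsto f (atB b) (𝓝 lb))
    (hh : IntegrableOn h (stInt a b)) (hgh : ∀ x ∈ stInt a b, -h x ≤ g x) :
    IntegrableOn g (stInt a b) := by
  suffices hsum : IntegrableOn (fun x => g x + h x) (stInt a b) by
    simpa [Pi.sub_def] using hsum.sub hh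
  refine aecover_Ioc_stInt.integrable_of_lintegral_enorm_tendsto (lb - la + ∫ x in stInt a b, h x)
    ((hg.aestronglyMeasurable isOpen_stInt.measurableSet).add hh.aestronglyMeasurable) ?_
  refine (ENNReal.tendsto_ofReal (((hfb.comp tendsto_snd).sub (hfa.comp tendsto_fst)).add
    (tendsto_setIntegral_Ioc_stInt hab hh))).congr' ?_
  filter_upwards [eventually_le_and_Icc_subset_stInt hab] with p ⟨hle, hsub⟩
  have hIoc : Ioc p.1 p.2 ⊆ stInt a b := Ioc_subset_Icc_self.trans hsub
  have hgi : IntegrableOn g (Icc p.1 p.2) := (hg.mono hsub).integrableOn_Icc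
  have hghi : IntegrableOn (fun x => g x + h x) (Ioc p.1 p.2) :=
    (hgi.mono_set Ioc_subset_Icc_self).add (hh.mono_set hIoc)
  rw [Measure.restrict_restrict measurableSet_Ioc, inter_eq_left.2 hIoc, Function.comp_apply,
    Function.comp_apply, ← ofReal_integral_norm_eq_lintegral_enorm hghi,
    ← integral_Ioc_eq_sub_of_hasDerivAt hle (fun y hy => hf y (hsub hy)) hgi,
    ← integral_add (hgi.mono_set Ioc_subset_Icc_self) (hh.mono_set hIoc)]
  refine congrArg ENNReal.ofReal (setIntegral_congr_fun measurableSet_Ioc fun x hx => ?_)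
  exact (Real.norm_of_nonneg (neg_le_iff_add_nonneg.1 (hgh x (hIoc hx)))).symm

end ImproperIntegral

section Diffusion

variable {μ σ : ℝ → ℝ} {x₀ : ℝ} {U : Set ℝ}

lemma continuousOn_drift (hμ : ContinuousOn μ U) (hσ : ContinuousOn σ U)
    (hσpos : ∀ x ∈ U, 0 < σ x ^ 2) : ContinuousOn (fun y => 2 * μ y / σ y ^ 2) U :=
  (continuousOn_const.mul hμ).div (hσ.pow 2) fun x hx => (hσpos x hx).ne'

lemma mDen_pos {x : ℝ} (hσx : 0 < σ x ^ 2) : 0 < mDen μ σ x₀ x :=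
  div_pos two_pos (mul_pos hσx (Real.exp_pos _))

lemma hasDerivAt_inv_sDen (hU : IsOpen U) (hU' : U.OrdConnected) (hx₀ : x₀ ∈ U)
    (hq : ContinuousOn (fun y => 2 * μ y / σ y ^ 2) U) {x : ℝ} (hx : x ∈ U) :
    HasDerivAt (fun x => (sDen μ σ x₀ x)⁻¹) (μ x * mDen μ σ x₀ x) x := by
  convert (hasDerivAt_integral_of_continuousOn hU hU' hq hx₀ hx).exp using 1
  · ext y
    rw [sDen, Real.exp_neg, inv_inv]
  · simp only [mDen, sDen, Real.exp_neg, div_eq_mul_inv, mul_inv, inv_inv]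
    ring

lemma continuousOn_mDen (hU : IsOpen U) (hU' : U.OrdConnected) (hx₀ : x₀ ∈ U)
    (hσ : ContinuousOn σ U) (hσpos : ∀ x ∈ U, 0 < σ x ^ 2)
    (hq : ContinuousOn (fun y => 2 * μ y / σ y ^ 2) U) : ContinuousOn (mDen μ σ x₀) U := by
  have hs : ContinuousOn (sDen μ σ x₀) U := fun x hx =>
    (hasDerivAt_integral_of_continuousOn hU hU' hq hx₀ hx).continuousAt.neg.rexp.continuousWithinAt
  exact continuousOn_const.div ((hσ.pow 2).mul hs) fun x hx =>
    (mul_pos (hσpos x hx) (Real.exp_pos _)).ne'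

lemma tendsto_sDen_atB {a : ℝ} {b : EReal} (hab : (a : EReal) < b)
    (hσpos : ∀ x ∈ stInt a b, 0 < σ x ^ 2) (hMint : IntegrableOn (mDen μ σ x₀) (stInt a b))
    (hsM : Tendsto (fun x => sDen μ σ x₀ x * Mab μ σ x₀ a x) (atB b) atTop) :
    Tendsto (sDen μ σ x₀) (atB b) atTop := by
  refine hsM.atTop_of_mul_le_const₀ (C := ∫ u in stInt a b, mDen μ σ x₀ u)
    (Eventually.of_forall fun x => (Real.exp_pos _).le) ?_
  filter_upwards [eventually_atB hab] with x hx
  refine setIntegral_mono_set hMint ?_ (Eventually.of_forall fun y hy => ?_)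
  · filter_upwards [ae_restrict_mem isOpen_stInt.measurableSet] with y hy
    exact (mDen_pos (hσpos y hy)).le
  · exact ⟨hy.1, (EReal.coe_lt_coe_iff.2 hy.2).trans hx.2⟩

end Diffusion

theorem statement2_general    (a : ℝ) (b : EReal) (hab : (a : EReal) < b)
    (μ σ : ℝ → ℝ) (x₀ : ℝ) (hx₀ : x₀ ∈ stInt a b)
    (hμcont : ContinuousOn μ (stInt a b)) (hσcont : ContinuousOn σ (stInt a b))
    (hσpos : ∀ x ∈ stInt a b, 0 < (σ x) ^ 2)
    (hsa : Tendsto (sDen μ σ x₀) (𝓝[>] a) atTop)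
    (hsMb : Tendsto (fun x => sDen μ σ x₀ x * Mab μ σ x₀ a x) (atB b) atTop)
    (μa : ℝ) (hμa : Tendsto μ (𝓝[>] a) (𝓝 μa))
    (hμb : ∃ L : EReal, Tendsto (fun x => ((μ x : ℝ) : EReal)) (atB b) (𝓝 L))
    (hMint : IntegrableOn (mDen μ σ x₀) (stInt a b)) :
    IntegrableOn (fun u => μ u * mDen μ σ x₀ u) (stInt a b) ∧
    ∫ u in stInt a b, μ u * mDen μ σ x₀ u = 0 := by
  have hq := continuousOn_drift hμcont hσcont hσpos
  have hf : ∀ x ∈ stInt a b, HasDerivAt (fun x => (sDen μ σ x₀ x)⁻¹) (μ x * mDen μ σ x₀ x) x :=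
    fun x hx => hasDerivAt_inv_sDen isOpen_stInt ordConnected_stInt hx₀ hq hx
  have hm : ∀ x ∈ stInt a b, 0 < mDen μ σ x₀ x := fun x hx => mDen_pos (hσpos x hx)
  have hg : ContinuousOn (fun u => μ u * mDen μ σ x₀ u) (stInt a b) :=
    hμcont.mul (continuousOn_mDen isOpen_stInt ordConnected_stInt hx₀ hσcont hσpos hq)
  have hfa := hsa.inv_tendsto_atTop
  have hfb := (tendsto_sDen_atB hab hσpos hMint hsMb).inv_tendsto_atTop
  have hint : IntegrableOn (fun u => μ u * mDen μ σ x₀ u) (stInt a b) := by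
    rcases bddBelow_or_bddAbove_image_stInt hab hμcont hμa hμb with ⟨B, hB⟩ | ⟨B, hB⟩
    · refine integrableOn_stInt_of_hasDerivAt_of_neg_le hab hf hg hfa hfb (hMint.const_mul |B|)
        fun x hx => ?_
      nlinarith [hB (mem_image_of_mem μ hx), neg_abs_le B, hm x hx]
    · suffices IntegrableOn (fun u => -(μ u * mDen μ σ x₀ u)) (stInt a b) by simpa using this.neg
      refine integrableOn_stInt_of_hasDerivAt_of_neg_le hab (fun x hx => (hf x hx).neg) hg.neg
        hfa.neg hfb.neg (hMint.const_mul |B|) fun x hx => ?_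
      nlinarith [hB (mem_image_of_mem μ hx), le_abs_self B, hm x hx]
  exact ⟨hint, by simpa using integral_stInt_of_hasDerivAt_of_tendsto hab hf hint hfa hfb⟩

theorem statement2    (a : ℝ) (b : EReal) (hab : (a : EReal) < b)
    (μ σ : ℝ → ℝ) (x₀ : ℝ) (hx₀ : x₀ ∈ stInt a b)
    (hμcont : ContinuousOn μ (stInt a b)) (hσcont : ContinuousOn σ (stInt a b))
    (hσpos : ∀ x ∈ stInt a b, 0 < (σ x) ^ 2)
    (hMfin : ∀ x ∈ stInt a b, IntegrableOn (mDen μ σ x₀) (Set.Ioo a x))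
    (hsa : Tendsto (sDen μ σ x₀) (𝓝[>] a) atTop)
    (hsMb : Tendsto (fun x => sDen μ σ x₀ x * Mab μ σ x₀ a x) (atB b) atTop)
    (μa : ℝ) (hμa : Tendsto μ (𝓝[>] a) (𝓝 μa))
    (hμb : ∃ L : EReal, Tendsto (fun x => ((μ x : ℝ) : EReal)) (atB b) (𝓝 L))
    (hMint : IntegrableOn (mDen μ σ x₀) (stInt a b)) :
    IntegrableOn (fun u => μ u * mDen μ σ x₀ u) (stInt a b) ∧
    ∫ u in stInt a b, μ u * mDen μ σ x₀ u = 0 :=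
  statement2_general a b hab μ σ x₀ hx₀ hμcont hσcont hσpos hsa hsMb μa hμa hμb hMint
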